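/- Let p be an odd prime, F a field containing a primitive p-th root of unity ξ_p, a ∈ F^× with K = F(a^{1/p}) a degree p extension, and σ a generator of G = Gal(K/F). Let J = K^×/K^{×p} and J_{p-1} = ker((σ-1)^{p-1} acting on J). For [γ] ∈ J_{p-1}, N(γ) ∈ K^{×p} ∩ F^×, and the element e([γ]) ∈ F_p defined by ξ_p^{e([γ])} = σ(N(γ)^{1/p})/N(γ)^{1/p} is well-defined (independent of the representative γ and of the choice of p-th root) and e: J_{p-1} → F_p is a group homomorphism. -/

import Mathlib

noncomputable section

/-- The subgroup of `p`-th powers in `K^×`. -/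
def pthPowers (p : ℕ) (K : Type) [Field K] : Subgroup Kˣ :=
  (powMonoidHom p : Kˣ →* Kˣ).range

instance (p : ℕ) (K : Type) [Field K] : (pthPowers p K).Normal :=
  Subgroup.normal_of_comm _

/-- The `𝔽_p[Gal(K/F)]`-module `J = K^×/K^{×p}` (written multiplicatively). -/
abbrev Jmod (p : ℕ) (K : Type) [Field K] := Kˣ ⧸ pthPowers p K

/-- The class `[γ] ∈ J` of `γ ∈ K^×`. -/
def mkJ (p : ℕ) (K : Type) [Field K] : Kˣ →* Jmod p K := QuotientGroup.mk' _

/-- The action of an `F`-automorphism `σ` of `K` on `K^×`. -/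
def sigU (p : ℕ) (K : Type) [Field K] (F : Type) [Field F] [Algebra F K]
    (σ : K ≃ₐ[F] K) : Kˣ →* Kˣ :=
  Units.map (σ.toAlgHom.toRingHom.toMonoidHom)

/-- The action of `σ` on `J = K^×/K^{×p}`. -/
def sigJ (p : ℕ) (K : Type) [Field K] (F : Type) [Field F] [Algebra F K]
    (σ : K ≃ₐ[F] K) : Jmod p K →* Jmod p K :=
  QuotientGroup.map _ _ (sigU p K F σ) (by
    rintro x ⟨y, rfl⟩
    exact ⟨sigU p K F σ y, by simp [powMonoidHom, map_pow]⟩)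

/-- The action of `σ - 1` on the multiplicative module `J`: `x ↦ σ(x)·x⁻¹`. -/
def rhoJ (p : ℕ) (K : Type) [Field K] (F : Type) [Field F] [Algebra F K]
    (σ : K ≃ₐ[F] K) : Jmod p K →* Jmod p K :=
  MonoidHom.mk' (fun x => sigJ p K F σ x * x⁻¹) (by
    intro a b
    show sigJ p K F σ (a * b) * (a * b)⁻¹ = (sigJ p K F σ a * a⁻¹) * (sigJ p K F σ b * b⁻¹)
    rw [map_mul, mul_inv_rev, mul_comm (b⁻¹) (a⁻¹)]
    exact mul_mul_mul_comm (sigJ p K F σ a) (sigJ p K F σ b) a⁻¹ b⁻¹)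

/-- The action of `(σ - 1)^n` on `J`. -/
def rhoPowJ (p : ℕ) (K : Type) [Field K] (F : Type) [Field F] [Algebra F K]
    (σ : K ≃ₐ[F] K) : ℕ → (Jmod p K →* Jmod p K)
  | 0 => MonoidHom.id _
  | n + 1 => (rhoJ p K F σ).comp (rhoPowJ p K F σ n)

end

/-! Since `J` has exponent `p`, it is an `𝔽_p`-module, and there `(σ - 1)^(p-1) = ∑_{i<p} σ^i`
because `(X - 1)^p = X^p - 1` in `𝔽_p[X]`. As `K/F` is a cyclic Kummer extension of degree `p`,
the right side sends `[γ]` to `[N(γ)]`; so `[γ] ∈ J_{p-1}` exactly when `N(γ)` is a `p`-th power.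
If `r^p = N(γ) ∈ F`, then `σ(r)/r` is a `p`-th root of unity, hence a power of `ξ`. Two roots `r`
differ by a root of unity, which `σ` fixes, and changing `γ` by `u^p` changes `r` by a factor
`N(u) ∈ F`, also fixed by `σ`; so the exponent depends only on `[γ]`, and it is additive because
roots of a product of norms may be taken as products of roots. -/

open Finset Polynomial

theorem MonoidHom.existsUnique_forall_rel {G A : Type*} [MulOneClass G] [Group A]
    (R : G → A → Prop) (hR : ∀ g, ∃! a, R g a)
    (hmul : ∀ g h a b, R g a → R h b → R (g * h) (a * b)) :
    ∃! f : G →* A, ∀ g, R g (f g) := by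
  choose f hf huniq using hR
  refine ⟨MonoidHom.mk' f fun g h => (huniq _ _ (hmul _ _ _ _ (hf g) (hf h))).symm, hf, ?_⟩
  intro f' hf'
  ext g
  exact huniq g _ (hf' g)

theorem sub_one_pow_pred_eq_sum_pow (p : ℕ) [Fact p.Prime] {R : Type*} [Ring R]
    [Algebra (ZMod p) R] (x : R) : (x - 1) ^ (p - 1) = ∑ i ∈ range p, x ^ i := by
  have hX : (X - 1 : (ZMod p)[X]) ^ (p - 1) = ∑ i ∈ range p, X ^ i := by
    refine mul_left_cancel₀ (X_sub_C_ne_zero 1) ?_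
    rw [C_1, ← pow_succ', Nat.sub_add_cancel (Fact.out : p.Prime).one_le, sub_pow_char, one_pow,
      mul_geom_sum]
  simpa using congrArg (aeval x) hX

section Jmod

variable {p : ℕ} {K : Type} [Field K]

theorem Jmod.pow_eq_one (x : Jmod p K) : x ^ p = 1 :=
  QuotientGroup.induction_on x fun γ => (QuotientGroup.eq_one_iff _).mpr ⟨γ, rfl⟩

theorem mkJ_eq_one_iff {γ : Kˣ} : mkJ p K γ = 1 ↔ ∃ w : Kˣ, w ^ p = γ :=
  QuotientGroup.eq_one_iff γ

instance : Module (ZMod p) (Additive (Jmod p K)) :=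
  AddCommGroup.zmodModule (G := Additive (Jmod p K)) (n := p) fun x =>
    congrArg Additive.ofMul (Jmod.pow_eq_one x.toMul)

variable {F : Type} [Field F] [Algebra F K] (σ : K ≃ₐ[F] K)

def sigJEnd : Module.End (ZMod p) (Additive (Jmod p K)) :=
  (MonoidHom.toAdditive (sigJ p K F σ)).toZModLinearMap p

theorem ofMul_rhoPowJ (n : ℕ) (x : Jmod p K) :
    Additive.ofMul (rhoPowJ p K F σ n x) = ((sigJEnd σ - 1) ^ n) (Additive.ofMul x) := by
  induction n generalizing x with
  | zero => rfl
  | succ n ih =>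
    rw [pow_succ', Module.End.mul_apply, ← ih, LinearMap.sub_apply, Module.End.one_apply,
      sub_eq_add_neg]
    rfl

theorem sigJEnd_pow_ofMul_mkJ (i : ℕ) (γ : Kˣ) :
    (sigJEnd σ ^ i) (Additive.ofMul (mkJ p K γ)) =
      Additive.ofMul (mkJ p K (sigU p K F (σ ^ i) γ)) := by
  induction i with
  | zero => rfl
  | succ i ih => rw [pow_succ', Module.End.mul_apply, ih, pow_succ']; rfl

theorem rhoPowJ_pred_mkJ [Fact p.Prime] (γ : Kˣ) :
    rhoPowJ p K F σ (p - 1) (mkJ p K γ) = mkJ p K (∏ i ∈ range p, sigU p K F (σ ^ i) γ) := by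
  apply Additive.ofMul.injective
  rw [ofMul_rhoPowJ, sub_one_pow_pred_eq_sum_pow, LinearMap.sum_apply, map_prod, ofMul_prod]
  exact sum_congr rfl fun i _ => sigJEnd_pow_ofMul_mkJ σ i γ

end Jmod

section Galois

variable {F K : Type} [Field F] [Field K] [Algebra F K]

theorem isGalois_of_pow_finrank_eq [FiniteDimensional F K] {ξ : F}
    (hξ : IsPrimitiveRoot ξ (Module.finrank F K)) {α : K} {a : F}
    (hα : α ^ Module.finrank F K = algebraMap F K a) (hadj : Algebra.adjoin F {α} = ⊤) :
    IsGalois F K := by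
  have hcyc := (isCyclic_tfae F K ⟨ξ, (mem_primitiveRoots Module.finrank_pos).mpr hξ⟩).out 2 0
  exact (hcyc.mp ⟨α, ⟨a, hα.symm⟩, IntermediateField.adjoin_eq_top_of_algebra _ _ hadj⟩).1

theorem algebraMap_norm_eq_prod_pow [FiniteDimensional F K] [IsGalois F K] {σ : K ≃ₐ[F] K}
    (hσ : ∀ η, η ∈ Subgroup.zpowers σ) (x : K) :
    algebraMap F K (Algebra.norm F x) = ∏ i ∈ range (Module.finrank F K), (σ ^ i) x := by
  classical
  have horder : orderOf σ = Module.finrank F K :=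
    (orderOf_eq_card_of_forall_mem_zpowers hσ).trans (IsGalois.card_aut_eq_finrank F K)
  rw [Algebra.norm_eq_prod_automorphisms, ← IsCyclic.image_range_orderOf hσ,
    prod_image fun i hi j hj => pow_injOn_Iio_orderOf (by simpa using hi) (by simpa using hj),
    horder]

theorem exists_pow_eq_algebraMap_norm_of_mem_ker {p : ℕ} [Fact p.Prime] [FiniteDimensional F K]
    [IsGalois F K] {σ : K ≃ₐ[F] K} (hσ : ∀ η, η ∈ Subgroup.zpowers σ)
    (hdeg : Module.finrank F K = p) {γ : Kˣ} (hγ : mkJ p K γ ∈ (rhoPowJ p K F σ (p - 1)).ker) :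
    ∃ r : K, r ≠ 0 ∧ r ^ p = algebraMap F K (Algebra.norm F (γ : K)) := by
  rw [MonoidHom.mem_ker, rhoPowJ_pred_mkJ, mkJ_eq_one_iff] at hγ
  obtain ⟨w, hw⟩ := hγ
  refine ⟨w, w.ne_zero, ?_⟩
  rw [algebraMap_norm_eq_prod_pow hσ, hdeg, ← Units.val_pow_eq_pow_val, hw, Units.coe_prod]
  rfl

end Galois

section Index

variable {F K : Type} [Field F] [Field K] [Algebra F K]

/-- `c` is the index `e([γ])`: `ξ^c = σ(r)/r` for every `p`-th root `r` of `N(γ)`. -/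
def IsIndex (p : ℕ) (σ : K ≃ₐ[F] K) (ξ : F) (γ : Kˣ) (c : ZMod p) : Prop :=
  ∀ r : K, r ≠ 0 → r ^ p = algebraMap F K (Algebra.norm F (γ : K)) →
    σ r = algebraMap F K ξ ^ c.val * r

theorem algebraMap_norm_ne_zero (γ : Kˣ) : algebraMap F K (Algebra.norm F (γ : K)) ≠ 0 :=
  ((γ.isUnit.map (Algebra.norm F)).map (algebraMap F K)).ne_zero

variable {p : ℕ} {σ : K ≃ₐ[F] K} {ξ : F}

theorem IsIndex.of_mkJ_eq {γ γ' : Kˣ} {c : ZMod p} (h : mkJ p K γ = mkJ p K γ')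
    (hc : IsIndex p σ ξ γ c) : IsIndex p σ ξ γ' c := by
  obtain ⟨_, ⟨u, rfl⟩, hu⟩ := (QuotientGroup.mk'_eq_mk' _).mp h
  intro r hr hrp
  set t := algebraMap F K (Algebra.norm F (u : K))
  have ht : t ≠ 0 := algebraMap_norm_ne_zero u
  have hnorm : algebraMap F K (Algebra.norm F (γ' : K)) =
      algebraMap F K (Algebra.norm F (γ : K)) * t ^ p := by
    simp [t, ← hu, powMonoidHom]
  have hquot := hc (r / t) (div_ne_zero hr ht) (by
    rw [div_pow, hrp, hnorm, mul_div_cancel_right₀ _ (pow_ne_zero p ht)])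
  rw [map_div₀, σ.commutes, mul_div_assoc'] at hquot
  exact (div_left_inj' ht).mp hquot

theorem IsIndex.mul [NeZero p] (hξ : ξ ^ p = 1) {γ δ : Kˣ} {c d : ZMod p}
    (hγ : ∃ r : K, r ≠ 0 ∧ r ^ p = algebraMap F K (Algebra.norm F (γ : K)))
    (hc : IsIndex p σ ξ γ c) (hd : IsIndex p σ ξ δ d) : IsIndex p σ ξ (γ * δ) (c + d) := by
  obtain ⟨r, hr, hrp⟩ := hγ
  intro s hs hsp
  have hquot := hd (s / r) (div_ne_zero hs hr) (by
    rw [div_pow, hsp, hrp, Units.val_mul, map_mul, map_mul,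
      mul_div_cancel_left₀ _ (algebraMap_norm_ne_zero γ)])
  have hξK : algebraMap F K ξ ^ p = 1 := by rw [← map_pow, hξ, map_one]
  calc σ s = σ r * σ (s / r) := by rw [← map_mul, mul_div_cancel₀ _ hr]
    _ = algebraMap F K ξ ^ (c.val + d.val) * s := by
      rw [hc r hr hrp, hquot, pow_add]
      field_simp
    _ = algebraMap F K ξ ^ (c + d).val * s := by
      rw [ZMod.val_add, ← pow_eq_pow_mod _ hξK]

theorem exists_isIndex [NeZero p] (hξ : IsPrimitiveRoot ξ p) {γ : Kˣ}
    (hγ : ∃ r : K, r ≠ 0 ∧ r ^ p = algebraMap F K (Algebra.norm F (γ : K))) :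
    ∃ c : ZMod p, IsIndex p σ ξ γ c := by
  obtain ⟨r, hr, hrp⟩ := hγ
  have hξK := hξ.map_of_injective (algebraMap F K).injective
  obtain ⟨i, -, hi⟩ := hξK.eq_pow_of_pow_eq_one (ξ := σ r / r) (by
    rw [div_pow, ← map_pow, hrp, σ.commutes, ← hrp, div_self (pow_ne_zero p hr)])
  refine ⟨i, fun s hs hsp => ?_⟩
  obtain ⟨j, -, hj⟩ := hξK.eq_pow_of_pow_eq_one (ξ := s / r) (by
    rw [div_pow, hsp, ← hrp, div_self (pow_ne_zero p hr)])
  rw [ZMod.val_natCast, ← pow_eq_pow_mod _ hξK.pow_eq_one, ← div_mul_cancel₀ s hr, ← hj,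
    map_mul, map_pow, σ.commutes, ← div_mul_cancel₀ (σ r) hr, ← hi]
  ring

theorem IsIndex.unique [NeZero p] (hξ : IsPrimitiveRoot ξ p) {γ : Kˣ} {c d : ZMod p}
    (hγ : ∃ r : K, r ≠ 0 ∧ r ^ p = algebraMap F K (Algebra.norm F (γ : K)))
    (hc : IsIndex p σ ξ γ c) (hd : IsIndex p σ ξ γ d) : c = d := by
  obtain ⟨r, hr, hrp⟩ := hγ
  have hξK := hξ.map_of_injective (algebraMap F K).injective
  exact ZMod.val_injective p <| hξK.pow_inj (ZMod.val_lt c) (ZMod.val_lt d)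
    (mul_right_cancel₀ hr ((hc r hr hrp).symm.trans (hd r hr hrp)))

theorem existsUnique_isIndex_hom (σ : K ≃ₐ[F] K) [NeZero p] (hξ : IsPrimitiveRoot ξ p)
    (H : Subgroup (Jmod p K))
    (hH : ∀ γ : Kˣ, mkJ p K γ ∈ H →
      ∃ r : K, r ≠ 0 ∧ r ^ p = algebraMap F K (Algebra.norm F (γ : K))) :
    ∃! e : H →* Multiplicative (ZMod p),
      ∀ (γ : Kˣ) (hγ : mkJ p K γ ∈ H), IsIndex p σ ξ γ (e ⟨mkJ p K γ, hγ⟩).toAdd := by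
  have hrep (x : H) : ∃ γ : Kˣ, mkJ p K γ = x := QuotientGroup.mk'_surjective _ (x : Jmod p K)
  let R (x : H) (c : Multiplicative (ZMod p)) : Prop :=
    ∀ γ : Kˣ, mkJ p K γ = x → IsIndex p σ ξ γ c.toAdd
  have hR (x : H) : ∃! c, R x c := by
    obtain ⟨γ, hγ⟩ := hrep x
    have hroot := hH γ (hγ ▸ x.2)
    obtain ⟨c, hc⟩ := exists_isIndex (σ := σ) hξ hroot
    exact ⟨.ofAdd c, fun γ' h => hc.of_mkJ_eq (hγ.trans h.symm),
      fun d hd => IsIndex.unique hξ hroot (hd γ hγ) hc⟩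
  have hmul (x y : H) (c d) (hc : R x c) (hd : R y d) : R (x * y) (c * d) := by
    intro γ hγ
    obtain ⟨γ₁, h₁⟩ := hrep x
    obtain ⟨γ₂, h₂⟩ := hrep y
    refine ((hc γ₁ h₁).mul hξ.pow_eq_one (hH γ₁ (h₁ ▸ x.2)) (hd γ₂ h₂)).of_mkJ_eq ?_
    rw [map_mul, h₁, h₂, hγ, Subgroup.coe_mul]
  refine (existsUnique_congr fun e => ⟨fun he γ hγ => he _ γ rfl, fun he x γ hγ => ?_⟩).mp
    (MonoidHom.existsUnique_forall_rel R hR hmul)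
  rw [← show (⟨mkJ p K γ, hγ ▸ x.2⟩ : H) = x from Subtype.ext hγ]
  exact he γ _

end Index

theorem stmt_8_general (p : ℕ) [Fact p.Prime]
    (F K : Type) [Field F] [Field K] [Algebra F K]
    (xi : F) (hxi : IsPrimitiveRoot xi p)
    (a : Fˣ) (alpha : K) (halpha : alpha ^ p = algebraMap F K a)
    (hadj : Algebra.adjoin F {alpha} = ⊤)
    (hdeg : Module.finrank F K = p)
    (sigma : K ≃ₐ[F] K) (hgen : ∀ eta : K ≃ₐ[F] K, eta ∈ Subgroup.zpowers sigma) :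
    (∀ γ : Kˣ, mkJ p K γ ∈ (rhoPowJ p K F sigma (p - 1)).ker →
      ∃ r : K, r ≠ 0 ∧ r ^ p = algebraMap F K (Algebra.norm F (γ : K))) ∧
    (∃! e : ↥((rhoPowJ p K F sigma (p - 1)).ker) →* Multiplicative (ZMod p),
      ∀ (γ : Kˣ) (hγ : mkJ p K γ ∈ (rhoPowJ p K F sigma (p - 1)).ker) (r : K),
        r ≠ 0 → r ^ p = algebraMap F K (Algebra.norm F (γ : K)) →
        sigma r = algebraMap F K xi ^ (Multiplicative.toAdd (e ⟨mkJ p K γ, hγ⟩)).val * r) := by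
  have : FiniteDimensional F K := Module.finite_of_finrank_pos (hdeg ▸ Nat.Prime.pos Fact.out)
  have : IsGalois F K := isGalois_of_pow_finrank_eq (hdeg ▸ hxi) (hdeg ▸ halpha) hadj
  have hroot (γ : Kˣ) := exists_pow_eq_algebraMap_norm_of_mem_ker (γ := γ) hgen hdeg
  exact ⟨hroot, existsUnique_isIndex_hom sigma hxi _ hroot⟩

/-- Let `p` be an odd prime, `ξ` a primitive `p`-th root of unity in `F`,
`K = F(a^{1/p})` of degree `p`, `σ` a generator of `Gal(K/F)`, and
`J_{p-1} = ker (σ-1)^{p-1} ⊆ J = K^×/K^{×p}`.  For `[γ] ∈ J_{p-1}` the norm `N(γ)` is a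
`p`-th power in `K^×` (and lies in `F^×`), and there is a unique homomorphism
`e : J_{p-1} → 𝔽_p` (the index) with `ξ^{e([γ])} = σ(N(γ)^{1/p})/N(γ)^{1/p}`,
independent of the representative `γ` and of the choice of `p`-th root. -/
theorem stmt_8 (p : ℕ) [Fact p.Prime] (hp2 : Odd p)
    (F K : Type) [Field F] [Field K] [Algebra F K]
    (xi : F) (hxi : IsPrimitiveRoot xi p)
    (a : Fˣ) (alpha : K) (halpha : alpha ^ p = algebraMap F K a)
    (hadj : Algebra.adjoin F {alpha} = ⊤)
    (hdeg : Module.finrank F K = p)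
    (sigma : K ≃ₐ[F] K) (hgen : ∀ eta : K ≃ₐ[F] K, eta ∈ Subgroup.zpowers sigma) :
    (∀ γ : Kˣ, mkJ p K γ ∈ (rhoPowJ p K F sigma (p - 1)).ker →
      ∃ r : K, r ≠ 0 ∧ r ^ p = algebraMap F K (Algebra.norm F (γ : K))) ∧
    (∃! e : ↥((rhoPowJ p K F sigma (p - 1)).ker) →* Multiplicative (ZMod p),
      ∀ (γ : Kˣ) (hγ : mkJ p K γ ∈ (rhoPowJ p K F sigma (p - 1)).ker) (r : K),
        r ≠ 0 → r ^ p = algebraMap F K (Algebra.norm F (γ : K)) →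
        sigma r = algebraMap F K xi ^ (Multiplicative.toAdd (e ⟨mkJ p K γ, hγ⟩)).val * r) :=
  stmt_8_general p F K xi hxi a alpha halpha hadj hdeg sigma hgen
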